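/- Let G be a group and let C be a free G-category over a commutative ring k. Then the quotient category C/G and the skew category C[G] are equivalent k-categories. -/

import Mathlib

/-! Basic notion of a (small) category over a commutative ring `k`:
objects form a type, morphism sets are `k`-modules and composition is `k`-bilinear. -/

structure kCat (k : Type) [CommRing k] where
  Obj : Type
  Hom : Obj → Obj → Type
  [homAdd : ∀ x y, AddCommGroup (Hom x y)]
  [homMod : ∀ x y, Module k (Hom x y)]
  id : ∀ x, Hom x x
  comp : ∀ {x y z}, Hom y z → Hom x y → Hom x z
  id_comp : ∀ {x y} (f : Hom x y), comp (id y) f = f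
  comp_id : ∀ {x y} (f : Hom x y), comp f (id x) = f
  assoc : ∀ {w x y z} (h : Hom y z) (g : Hom x y) (f : Hom w x),
    comp (comp h g) f = comp h (comp g f)
  comp_add_left : ∀ {x y z} (g g' : Hom y z) (f : Hom x y),
    comp (g + g') f = comp g f + comp g' f
  comp_add_right : ∀ {x y z} (g : Hom y z) (f f' : Hom x y),
    comp g (f + f') = comp g f + comp g f'
  comp_smul_left : ∀ {x y z} (a : k) (g : Hom y z) (f : Hom x y),
    comp (a • g) f = a • comp g f
  comp_smul_right : ∀ {x y z} (a : k) (g : Hom y z) (f : Hom x y),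
    comp g (a • f) = a • comp g f

attribute [instance] kCat.homAdd kCat.homMod

/-- Transport of a morphism along equalities of its source and target. -/
def kCat.trans2 {k : Type} [CommRing k] (C : kCat k) {x x' y y' : C.Obj}
    (hx : x = x') (hy : y = y') (f : C.Hom x y) : C.Hom x' y' :=
  cast (by rw [hx, hy]) f

/-- A `k`-linear functor between categories over `k`. -/
structure kFunctor (k : Type) [CommRing k] (C D : kCat k) where
  obj : C.Obj → D.Obj
  map : ∀ x y, C.Hom x y →ₗ[k] D.Hom (obj x) (obj y)
  map_id : ∀ x, map x x (C.id x) = D.id (obj x)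
  map_comp : ∀ {x y z} (g : C.Hom y z) (f : C.Hom x y),
    map x z (C.comp g f) = D.comp (map y z g) (map x y f)

/-- The identity functor. -/
def kFunctor.idF (k : Type) [CommRing k] (C : kCat k) : kFunctor k C C where
  obj := fun x => x
  map := fun _ _ => LinearMap.id
  map_id := fun _ => rfl
  map_comp := fun _ _ => rfl

/-- Composition of `k`-linear functors. -/
def kFunctor.compF {k : Type} [CommRing k] {C D E : kCat k}
    (F : kFunctor k D E) (H : kFunctor k C D) : kFunctor k C E where
  obj := fun x => F.obj (H.obj x)
  map := fun x y => (F.map _ _).comp (H.map x y)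
  map_id := fun x => by simp [H.map_id, F.map_id]
  map_comp := fun g f => by simp [H.map_comp, F.map_comp]

/-- A natural transformation between `k`-linear functors. -/
structure kNatTrans {k : Type} [CommRing k] {C D : kCat k} (F G : kFunctor k C D) where
  app : ∀ x, D.Hom (F.obj x) (G.obj x)
  naturality : ∀ {x y} (f : C.Hom x y),
    D.comp (app y) (F.map x y f) = D.comp (G.map x y f) (app x)

/-- A natural isomorphism between `k`-linear functors, given by a pair of mutually
inverse natural transformations. -/
structure kNatIso {k : Type} [CommRing k] {C D : kCat k} (F G : kFunctor k C D) where
  hom : kNatTrans F G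
  inv : kNatTrans G F
  hom_inv : ∀ x, D.comp (inv.app x) (hom.app x) = D.id (F.obj x)
  inv_hom : ∀ x, D.comp (hom.app x) (inv.app x) = D.id (G.obj x)

/-- An equivalence of categories over `k`. -/
structure kEquivalence (k : Type) [CommRing k] (C D : kCat k) where
  F : kFunctor k C D
  G : kFunctor k D C
  unitIso : kNatIso (kFunctor.idF k C) (kFunctor.compF G F)
  counitIso : kNatIso (kFunctor.compF F G) (kFunctor.idF k D)

/-- An isomorphism of categories over `k`: a `k`-linear functor which is bijective on
objects and bijective (hence a `k`-module isomorphism) on each morphism module. -/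
structure kCatIso (k : Type) [CommRing k] (C D : kCat k) where
  F : kFunctor k C D
  objBij : Function.Bijective F.obj
  homBij : ∀ x y, Function.Bijective (F.map x y)

/-- The full subcategory on the objects satisfying a predicate `P`. -/
def kCat.fullSub {k : Type} [CommRing k] (C : kCat k) (P : C.Obj → Prop) : kCat k where
  Obj := { x : C.Obj // P x }
  Hom := fun x y => C.Hom x.1 y.1
  homAdd := fun _ _ => inferInstance
  homMod := fun _ _ => inferInstance
  id := fun x => C.id x.1
  comp := fun g f => C.comp g f
  id_comp := fun f => C.id_comp f
  comp_id := fun f => C.comp_id f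
  assoc := fun h g f => C.assoc h g f
  comp_add_left := fun g g' f => C.comp_add_left g g' f
  comp_add_right := fun g f f' => C.comp_add_right g f f'
  comp_smul_left := fun a g f => C.comp_smul_left a g f
  comp_smul_right := fun a g f => C.comp_smul_right a g f

/-- The inclusion functor of a full subcategory. -/
def kCat.inclFunctor {k : Type} [CommRing k] (C : kCat k) (P : C.Obj → Prop) :
    kFunctor k (C.fullSub P) C where
  obj := fun x => x.1
  map := fun _ _ => LinearMap.id
  map_id := fun _ => rfl
  map_comp := fun _ _ => rfl

/-! Direct sum helpers. -/

open DirectSum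

/-- The element of a direct sum concentrated in one component. -/
noncomputable def dsSingle {ι : Type} {M : ι → Type} [∀ i, AddCommGroup (M i)]
    (i : ι) (m : M i) : ⨁ i, M i :=
  letI := Classical.decEq ι
  DFinsupp.single i m

/-- The linear inclusion of one component into a direct sum. -/
noncomputable def dsLof (k : Type) [CommRing k] {ι : Type} (M : ι → Type)
    [∀ i, AddCommGroup (M i)] [∀ i, Module k (M i)] (i : ι) : M i →ₗ[k] ⨁ i, M i :=
  letI := Classical.decEq ι
  DirectSum.lof k ι M i

/-- A family of submodules of `M` is *internal* (i.e. `M` is their internal direct sum)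
when the canonical summation map from the direct sum of the submodules to `M`
is bijective. -/
def SubmodulesInternal (k : Type) [CommRing k] {ι : Type} {M : Type}
    [AddCommGroup M] [Module k M] (p : ι → Submodule k M) : Prop :=
  letI := Classical.decEq ι
  Function.Bijective
    (⇑(DFinsupp.sumAddHom (β := fun i => ↥(p i)) fun i => ((p i).subtype).toAddMonoidHom))

/-! `G`-categories over `k`, free actions, the quotient (orbit) category of a free
`G`-category, and the skew category. -/

/-- An action of a group `G` on a category `C` over `k`: an action on objects together
with `k`-linear maps on morphism modules, compatible with composition, identities and
the group law. -/
structure GAction (k G : Type) [CommRing k] [Group G] (C : kCat k) where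
  smulObj : G → C.Obj → C.Obj
  one_smulObj : ∀ x, smulObj 1 x = x
  mul_smulObj : ∀ s t x, smulObj (s * t) x = smulObj s (smulObj t x)
  smulHom : ∀ (s : G) (x y : C.Obj), C.Hom x y →ₗ[k] C.Hom (smulObj s x) (smulObj s y)
  smulHom_comp : ∀ (s : G) {x y z} (g : C.Hom y z) (f : C.Hom x y),
    smulHom s x z (C.comp g f) = C.comp (smulHom s y z g) (smulHom s x y f)
  smulHom_id : ∀ (s : G) (x), smulHom s x x (C.id x) = C.id (smulObj s x)
  one_smulHom : ∀ {x y} (f : C.Hom x y), HEq (smulHom 1 x y f) f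
  mul_smulHom : ∀ (s t : G) {x y} (f : C.Hom x y),
    HEq (smulHom (s * t) x y f) (smulHom s _ _ (smulHom t x y f))

namespace GAction

variable {k G : Type} [CommRing k] [Group G] {C : kCat k}

/-- The action is free when no nontrivial group element fixes an object. -/
def IsFree (A : GAction k G C) : Prop := ∀ (s : G) (x : C.Obj), A.smulObj s x = x → s = 1

/-- The orbit equivalence relation on objects. -/
def orbitSetoid (A : GAction k G C) : Setoid C.Obj where
  r x y := ∃ s : G, A.smulObj s x = y
  iseqv := by
    refine ⟨fun x => ⟨1, A.one_smulObj x⟩, ?_, ?_⟩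
    · rintro x y ⟨s, h⟩
      exact ⟨s⁻¹, by rw [← h, ← A.mul_smulObj, inv_mul_cancel, A.one_smulObj]⟩
    · rintro x y z ⟨s, h⟩ ⟨t, h'⟩
      exact ⟨t * s, by rw [A.mul_smulObj, h, h']⟩

/-- The set of `G`-orbits of objects. -/
def QuotObj (A : GAction k G C) : Type := Quotient A.orbitSetoid

/-- The orbit of an object. -/
def orb (A : GAction k G C) (x : C.Obj) : A.QuotObj := Quotient.mk A.orbitSetoid x

theorem orb_smul (A : GAction k G C) (s : G) (x : C.Obj) :
    A.orb (A.smulObj s x) = A.orb x :=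
  (Quotient.sound ⟨s, rfl⟩ : A.orb x = A.orb (A.smulObj s x)).symm

/-- The index type of pairs `(x, y)` with `x` in the orbit `α` and `y` in the orbit `β`. -/
def PairIdx (A : GAction k G C) (α β : A.QuotObj) : Type :=
  { x : C.Obj // A.orb x = α } × { y : C.Obj // A.orb y = β }

/-- The direct sum `⊕_{x ∈ α, y ∈ β} Hom_C(x, y)`. -/
def HomSum (A : GAction k G C) (α β : A.QuotObj) : Type :=
  ⨁ p : A.PairIdx α β, C.Hom p.1.1 p.2.1

noncomputable instance (A : GAction k G C) (α β : A.QuotObj) :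
    AddCommGroup (A.HomSum α β) :=
  inferInstanceAs (AddCommGroup (⨁ p : A.PairIdx α β, C.Hom p.1.1 p.2.1))

noncomputable instance (A : GAction k G C) (α β : A.QuotObj) :
    Module k (A.HomSum α β) :=
  inferInstanceAs (Module k (⨁ p : A.PairIdx α β, C.Hom p.1.1 p.2.1))

/-- The element of `HomSum` concentrated in the component indexed by `(x, y)`. -/
noncomputable def homSumSingle (A : GAction k G C) {α β : A.QuotObj} {x y : C.Obj}
    (hx : A.orb x = α) (hy : A.orb y = β) (f : C.Hom x y) : A.HomSum α β :=
  dsSingle (M := fun p : A.PairIdx α β => C.Hom p.1.1 p.2.1) ⟨⟨x, hx⟩, ⟨y, hy⟩⟩ f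

/-- The submodule of `HomSum` spanned by the elements `s • f - f`; quotienting by it
produces the largest quotient on which `G` acts trivially. -/
noncomputable def gSub (A : GAction k G C) (α β : A.QuotObj) :
    Submodule k (A.HomSum α β) :=
  Submodule.span k
    {z | ∃ (s : G) (x y : C.Obj) (hx : A.orb x = α) (hy : A.orb y = β) (f : C.Hom x y),
      z = A.homSumSingle ((A.orb_smul s x).trans hx) ((A.orb_smul s y).trans hy)
            (A.smulHom s x y f)
          - A.homSumSingle hx hy f}

/-- The morphism module of the quotient category `C/G` from the orbit `α` to the
orbit `β`. -/
def QuotHom (A : GAction k G C) (α β : A.QuotObj) : Type :=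
  A.HomSum α β ⧸ A.gSub α β

noncomputable instance (A : GAction k G C) (α β : A.QuotObj) :
    AddCommGroup (A.QuotHom α β) :=
  inferInstanceAs (AddCommGroup (A.HomSum α β ⧸ A.gSub α β))

noncomputable instance (A : GAction k G C) (α β : A.QuotObj) :
    Module k (A.QuotHom α β) :=
  inferInstanceAs (Module k (A.HomSum α β ⧸ A.gSub α β))

/-- The `k`-linear map sending a morphism `f : x → y` of `C` to its class in the
morphism module of the quotient category. -/
noncomputable def projL (A : GAction k G C) {α β : A.QuotObj} {x y : C.Obj}
    (hx : A.orb x = α) (hy : A.orb y = β) : C.Hom x y →ₗ[k] A.QuotHom α β :=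
  (A.gSub α β).mkQ.comp
    (letI := Classical.decEq (A.PairIdx α β)
     DirectSum.lof k (A.PairIdx α β) (fun p => C.Hom p.1.1 p.2.1) ⟨⟨x, hx⟩, ⟨y, hy⟩⟩)

/-- The class of a morphism `f : x → y` of `C` in the quotient category. -/
noncomputable def proj (A : GAction k G C) {α β : A.QuotObj} {x y : C.Obj}
    (hx : A.orb x = α) (hy : A.orb y = β) (f : C.Hom x y) : A.QuotHom α β :=
  A.projL hx hy f

end GAction

/-- The structure of the quotient category `C/G` of a (free) `G`-category `C` over `k`:
its objects are the `G`-orbits of objects of `C`, its morphism modules are the modules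
`QuotHom`, and its composition and identities are induced by those of `C` via the
projection, making it a category over `k`. -/
structure QuotStr {k G : Type} [CommRing k] [Group G] {C : kCat k} (A : GAction k G C) where
  comp : ∀ {α β γ : A.QuotObj}, A.QuotHom β γ → A.QuotHom α β → A.QuotHom α γ
  id : ∀ α : A.QuotObj, A.QuotHom α α
  id_comp : ∀ {α β} (f : A.QuotHom α β), comp (id β) f = f
  comp_id : ∀ {α β} (f : A.QuotHom α β), comp f (id α) = f
  assoc : ∀ {α β γ δ} (h : A.QuotHom γ δ) (g : A.QuotHom β γ) (f : A.QuotHom α β),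
    comp (comp h g) f = comp h (comp g f)
  comp_add_left : ∀ {α β γ} (g g' : A.QuotHom β γ) (f : A.QuotHom α β),
    comp (g + g') f = comp g f + comp g' f
  comp_add_right : ∀ {α β γ} (g : A.QuotHom β γ) (f f' : A.QuotHom α β),
    comp g (f + f') = comp g f + comp g f'
  comp_smul_left : ∀ {α β γ} (a : k) (g : A.QuotHom β γ) (f : A.QuotHom α β),
    comp (a • g) f = a • comp g f
  comp_smul_right : ∀ {α β γ} (a : k) (g : A.QuotHom β γ) (f : A.QuotHom α β),
    comp g (a • f) = a • comp g f
  comp_proj : ∀ {α β γ} {x y z : C.Obj}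
    (hx : A.orb x = α) (hy : A.orb y = β) (hz : A.orb z = γ)
    (g : C.Hom y z) (f : C.Hom x y),
    comp (A.proj hy hz g) (A.proj hx hy f) = A.proj hx hz (C.comp g f)
  id_proj : ∀ {α} {x : C.Obj} (hx : A.orb x = α), id α = A.proj hx hx (C.id x)

/-- The quotient category `C/G` as a category over `k`. -/
noncomputable def QuotStr.toKCat {k G : Type} [CommRing k] [Group G] {C : kCat k}
    {A : GAction k G C} (Q : QuotStr A) : kCat k where
  Obj := A.QuotObj
  Hom := A.QuotHom
  homAdd := fun _ _ => inferInstance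
  homMod := fun _ _ => inferInstance
  id := Q.id
  comp := Q.comp
  id_comp := Q.id_comp
  comp_id := Q.comp_id
  assoc := Q.assoc
  comp_add_left := Q.comp_add_left
  comp_add_right := Q.comp_add_right
  comp_smul_left := Q.comp_smul_left
  comp_smul_right := Q.comp_smul_right

namespace GAction

variable {k G : Type} [CommRing k] [Group G] {C : kCat k}

/-- The morphism module `⊕_{s ∈ G} Hom_C(s·x, y)` of the skew category `C[G]`. -/
def SkewHom (A : GAction k G C) (x y : C.Obj) : Type :=
  ⨁ s : G, C.Hom (A.smulObj s x) y

noncomputable instance (A : GAction k G C) (x y : C.Obj) : AddCommGroup (A.SkewHom x y) :=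
  inferInstanceAs (AddCommGroup (⨁ s : G, C.Hom (A.smulObj s x) y))

noncomputable instance (A : GAction k G C) (x y : C.Obj) : Module k (A.SkewHom x y) :=
  inferInstanceAs (Module k (⨁ s : G, C.Hom (A.smulObj s x) y))

/-- The morphism `f ∈ Hom_C(s·x, y)` viewed in the `s`-component of
`Hom_{C[G]}(x, y)`. -/
noncomputable def skewSingle (A : GAction k G C) {x y : C.Obj} (s : G)
    (f : C.Hom (A.smulObj s x) y) : A.SkewHom x y :=
  dsSingle (M := fun s : G => C.Hom (A.smulObj s x) y) s f

end GAction

/-- The structure of the skew category `C[G]` of a `G`-category `C` over `k`: it has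
the same objects as `C`, morphism modules `SkewHom x y = ⊕_{s ∈ G} Hom_C(s·x, y)`,
composition determined on components by `g_t ∘ f_s = (g ∘ (t·f))_{ts}`, and identities
given by `(1_x)_1`. -/
structure SkewStr {k G : Type} [CommRing k] [Group G] {C : kCat k} (A : GAction k G C) where
  comp : ∀ {x y z : C.Obj}, A.SkewHom y z → A.SkewHom x y → A.SkewHom x z
  id : ∀ x : C.Obj, A.SkewHom x x
  id_comp : ∀ {x y} (f : A.SkewHom x y), comp (id y) f = f
  comp_id : ∀ {x y} (f : A.SkewHom x y), comp f (id x) = f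
  assoc : ∀ {w x y z} (h : A.SkewHom y z) (g : A.SkewHom x y) (f : A.SkewHom w x),
    comp (comp h g) f = comp h (comp g f)
  comp_add_left : ∀ {x y z} (g g' : A.SkewHom y z) (f : A.SkewHom x y),
    comp (g + g') f = comp g f + comp g' f
  comp_add_right : ∀ {x y z} (g : A.SkewHom y z) (f f' : A.SkewHom x y),
    comp g (f + f') = comp g f + comp g f'
  comp_smul_left : ∀ {x y z} (a : k) (g : A.SkewHom y z) (f : A.SkewHom x y),
    comp (a • g) f = a • comp g f
  comp_smul_right : ∀ {x y z} (a : k) (g : A.SkewHom y z) (f : A.SkewHom x y),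
    comp g (a • f) = a • comp g f
  comp_single : ∀ {x y z : C.Obj} (t s : G)
    (g : C.Hom (A.smulObj t y) z) (f : C.Hom (A.smulObj s x) y),
    comp (A.skewSingle t g) (A.skewSingle s f) =
      A.skewSingle (t * s)
        (C.trans2 (A.mul_smulObj t s x).symm rfl (C.comp g (A.smulHom t _ _ f)))
  id_single : ∀ x : C.Obj,
    id x = A.skewSingle 1 (C.trans2 (A.one_smulObj x).symm rfl (C.id x))

/-- The skew category `C[G]` as a category over `k`. -/
noncomputable def SkewStr.toKCat {k G : Type} [CommRing k] [Group G] {C : kCat k}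
    {A : GAction k G C} (S : SkewStr A) : kCat k where
  Obj := C.Obj
  Hom := A.SkewHom
  homAdd := fun _ _ => inferInstance
  homMod := fun _ _ => inferInstance
  id := S.id
  comp := S.comp
  id_comp := S.id_comp
  comp_id := S.comp_id
  assoc := S.assoc
  comp_add_left := S.comp_add_left
  comp_add_right := S.comp_add_right
  comp_smul_left := S.comp_smul_left
  comp_smul_right := S.comp_smul_right


section Aux
open GAction

variable {k G : Type} [CommRing k] [Group G] {C : kCat k} (A : GAction k G C)

theorem trans2_heq {x x' y y' : C.Obj} (hx : x = x') (hy : y = y') (f : C.Hom x y) :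
    HEq (C.trans2 hx hy f) f := by subst hx; subst hy; rfl

theorem comp_congr {x x' y y' z z' : C.Obj} (hx : x = x') (hy : y = y') (hz : z = z')
    {g : C.Hom y z} {g' : C.Hom y' z'} {f : C.Hom x y} {f' : C.Hom x' y'}
    (hg : HEq g g') (hf : HEq f f') : HEq (C.comp g f) (C.comp g' f') := by
  subst hx; subst hy; subst hz; rw [eq_of_heq hg, eq_of_heq hf]

theorem smulHom_congr {s s' : G} {x x' y y' : C.Obj} (hs : s = s') (hx : x = x') (hy : y = y')
    {f : C.Hom x y} {f' : C.Hom x' y'} (hf : HEq f f') :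
    HEq (A.smulHom s x y f) (A.smulHom s' x' y' f') := by
  subst hs; subst hx; subst hy; rw [eq_of_heq hf]

theorem id_congr {x x' : C.Obj} (h : x = x') : HEq (C.id x) (C.id x') := by subst h; rfl

theorem dsSingle_congr {ι : Type} {M : ι → Type} [∀ i, AddCommGroup (M i)]
    {i i' : ι} (h : i = i') {m : M i} {m' : M i'} (hm : HEq m m') :
    dsSingle i m = dsSingle i' m' := by subst h; rw [eq_of_heq hm]

theorem dsSingle_eq_lof {ι : Type} (M : ι → Type)
    [∀ i, AddCommGroup (M i)] [∀ i, Module k (M i)] (i : ι) (m : M i) :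
    dsSingle i m = dsLof k M i m := rfl

noncomputable def dsToModule (k : Type) [CommRing k] {ι : Type} (M : ι → Type)
    [∀ i, AddCommGroup (M i)] [∀ i, Module k (M i)]
    (N : Type) [AddCommGroup N] [Module k N] (φ : ∀ i, M i →ₗ[k] N) :
    (⨁ i, M i) →ₗ[k] N :=
  letI := Classical.decEq ι
  DirectSum.toModule k ι N φ

theorem dsToModule_single {ι : Type} {M : ι → Type}
    [∀ i, AddCommGroup (M i)] [∀ i, Module k (M i)]
    {N : Type} [AddCommGroup N] [Module k N] (φ : ∀ i, M i →ₗ[k] N) (i : ι) (m : M i) :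
    dsToModule k M N φ (dsSingle i m) = φ i m := by
  letI := Classical.decEq ι
  rw [dsSingle_eq_lof (k := k) M i m]
  exact DirectSum.toModule_lof k i m

theorem of_eq_dsSingle {ι : Type} {M : ι → Type} [inst : DecidableEq ι]
    [∀ i, AddCommGroup (M i)] (i : ι) (m : M i) :
    DirectSum.of M i m = dsSingle i m := by
  have h : inst = Classical.decEq ι := Subsingleton.elim _ _
  subst h; rfl

theorem ds_induction {ι : Type} {M : ι → Type} [∀ i, AddCommGroup (M i)]
    {P : (⨁ i, M i) → Prop} (h0 : P 0) (hs : ∀ i m, P (dsSingle i m))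
    (hadd : ∀ a b, P a → P b → P (a + b)) : ∀ x, P x := by
  classical
  intro x
  refine DirectSum.induction_on x h0 (fun i m => ?_) hadd
  rw [of_eq_dsSingle]; exact hs i m

end Aux

section Aux2
open GAction

variable {k G : Type} [CommRing k] [Group G] {C : kCat k} (A : GAction k G C)

theorem smul_smul_obj (s t : G) (x : C.Obj) :
    A.smulObj s (A.smulObj t x) = A.smulObj (s * t) x := (A.mul_smulObj s t x).symm

theorem exists_tr {α : A.QuotObj} {x : C.Obj} (hx : A.orb x = α) :
    ∃ s : G, A.smulObj s (Quotient.out α) = x :=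
  Quotient.exact ((Quotient.out_eq α).trans hx.symm)

noncomputable def trEl {α : A.QuotObj} {x : C.Obj} (hx : A.orb x = α) : G :=
  (exists_tr A hx).choose

theorem trEl_spec {α : A.QuotObj} {x : C.Obj} (hx : A.orb x = α) :
    A.smulObj (trEl A hx) (Quotient.out α) = x :=
  (exists_tr A hx).choose_spec

theorem smul_out (s : G) {α : A.QuotObj} {x : C.Obj} (hx : A.orb x = α) :
    A.smulObj s x = A.smulObj (s * trEl A hx) (Quotient.out α) := by
  rw [A.mul_smulObj, trEl_spec]

theorem inv_smul_spec {α : A.QuotObj} {x : C.Obj} (hx : A.orb x = α) :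
    A.smulObj (trEl A hx)⁻¹ x = Quotient.out α := by
  have h := congrArg (A.smulObj (trEl A hx)⁻¹) (trEl_spec A hx)
  rw [smul_smul_obj, inv_mul_cancel, A.one_smulObj] at h
  exact h.symm

theorem trEl_eq (hfree : A.IsFree) {α : A.QuotObj} {x : C.Obj} (hx : A.orb x = α) {s : G}
    (hs : A.smulObj s (Quotient.out α) = x) : s = trEl A hx := by
  have h : A.smulObj ((trEl A hx)⁻¹ * s) (Quotient.out α) = Quotient.out α := by
    rw [A.mul_smulObj, hs]; exact inv_smul_spec A hx
  have h1 := hfree _ _ h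
  rw [inv_mul_eq_one] at h1
  exact h1.symm

theorem trEl_out (hfree : A.IsFree) (α : A.QuotObj) :
    trEl A (show A.orb (Quotient.out α) = α from Quotient.out_eq α) = 1 :=
  (trEl_eq A hfree _ (A.one_smulObj _)).symm

theorem trEl_smul (hfree : A.IsFree) (s : G) (x : C.Obj) :
    trEl A (A.orb_smul s x) = s * trEl A (rfl : A.orb x = A.orb x) := by
  refine (trEl_eq A hfree _ ?_).symm
  rw [A.mul_smulObj, trEl_spec]

/-- `proj` as quotient mk of a single. -/
theorem proj_def {α β : A.QuotObj} {x y : C.Obj} (hx : A.orb x = α) (hy : A.orb y = β)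
    (f : C.Hom x y) :
    A.proj hx hy f = (A.gSub α β).mkQ (A.homSumSingle hx hy f) := rfl

theorem proj_congr {α β : A.QuotObj} {x x' y y' : C.Obj} (hxx : x = x') (hyy : y = y')
    (hx : A.orb x = α) (hx' : A.orb x' = α) (hy : A.orb y = β) (hy' : A.orb y' = β)
    {f : C.Hom x y} {f' : C.Hom x' y'} (hf : HEq f f') :
    A.proj hx hy f = A.proj hx' hy' f' := by
  subst hxx; subst hyy; rw [eq_of_heq hf]

theorem proj_smul (s : G) {α β : A.QuotObj} {x y : C.Obj}
    (hx : A.orb x = α) (hy : A.orb y = β)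
    (h1 : A.orb (A.smulObj s x) = α) (h2 : A.orb (A.smulObj s y) = β) (f : C.Hom x y) :
    A.proj h1 h2 (A.smulHom s x y f) = A.proj hx hy f := by
  rw [proj_def, proj_def, Submodule.mkQ_apply, Submodule.mkQ_apply]
  refine (Submodule.Quotient.eq (A.gSub α β)).mpr ?_
  refine Submodule.subset_span ?_
  exact ⟨s, x, y, hx, hy, f, rfl⟩

theorem quot_ind {α β : A.QuotObj} {P : A.QuotHom α β → Prop} (h0 : P 0)
    (hp : ∀ (x y : C.Obj) (hx : A.orb x = α) (hy : A.orb y = β) (f : C.Hom x y),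
      P (A.proj hx hy f))
    (hadd : ∀ a b, P a → P b → P (a + b)) : ∀ q, P q := by
  intro q
  obtain ⟨m, rfl⟩ := (A.gSub α β).mkQ_surjective q
  refine ds_induction (M := fun p : A.PairIdx α β => C.Hom p.1.1 p.2.1)
    (P := fun m => P ((A.gSub α β).mkQ m)) ?_ ?_ ?_ m
  · show P ((A.gSub α β).mkQ 0)
    rw [map_zero]; exact h0
  · rintro ⟨⟨x, hx⟩, ⟨y, hy⟩⟩ f
    exact hp x y hx hy f
  · intro a b ha hb
    show P ((A.gSub α β).mkQ (a + b))
    exact (congrArg P (map_add (A.gSub α β).mkQ a b)).mpr (hadd _ _ ha hb)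

theorem skew_ind {x y : C.Obj} {P : A.SkewHom x y → Prop} (h0 : P 0)
    (hs : ∀ (s : G) (f : C.Hom (A.smulObj s x) y), P (A.skewSingle s f))
    (hadd : ∀ a b, P a → P b → P (a + b)) : ∀ q, P q := by
  refine ds_induction (M := fun s : G => C.Hom (A.smulObj s x) y) h0 (fun s f => hs s f) hadd

end Aux2

section Aux3
open GAction

variable {k G : Type} [CommRing k] [Group G] {C : kCat k} (A : GAction k G C)

/-- Linear cast along object equalities. -/
def homCastL (C : kCat k) {x x' y y' : C.Obj} (hx : x = x') (hy : y = y') :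
    C.Hom x y →ₗ[k] C.Hom x' y' := hx ▸ hy ▸ LinearMap.id

theorem homCastL_heq {x x' y y' : C.Obj} (hx : x = x') (hy : y = y') (f : C.Hom x y) :
    HEq (homCastL C hx hy f) f := by subst hx; subst hy; rfl

/-- Component map of the functor `C/G → C[G]` on the `(x, y)` summand. -/
noncomputable def Fc (α β : A.QuotObj) (p : A.PairIdx α β) :
    C.Hom p.1.1 p.2.1 →ₗ[k] A.SkewHom (Quotient.out α) (Quotient.out β) :=
  (dsLof k (fun s : G => C.Hom (A.smulObj s (Quotient.out α)) (Quotient.out β))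
      ((trEl A p.2.2)⁻¹ * trEl A p.1.2)).comp
    ((homCastL C (smul_out A (trEl A p.2.2)⁻¹ p.1.2) (inv_smul_spec A p.2.2)).comp
      (A.smulHom (trEl A p.2.2)⁻¹ p.1.1 p.2.1))

theorem Fc_apply {α β : A.QuotObj} {x y : C.Obj} (hx : A.orb x = α) (hy : A.orb y = β)
    (f : C.Hom x y) :
    Fc A α β ⟨⟨x, hx⟩, ⟨y, hy⟩⟩ f =
      dsSingle (M := fun s : G => C.Hom (A.smulObj s (Quotient.out α)) (Quotient.out β))
        ((trEl A hy)⁻¹ * trEl A hx)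
        (homCastL C (smul_out A (trEl A hy)⁻¹ hx) (inv_smul_spec A hy)
          (A.smulHom (trEl A hy)⁻¹ x y f)) := by
  rw [dsSingle_eq_lof (k := k)]
  rfl

theorem skewSingle_congr {x y : C.Obj} {s s' : G} (h : s = s')
    {f : C.Hom (A.smulObj s x) y} {f' : C.Hom (A.smulObj s' x) y} (hf : HEq f f') :
    A.skewSingle s f = A.skewSingle s' f' := by
  subst h; rw [eq_of_heq hf]

theorem skewSingle_eq_dsSingle {x y : C.Obj} (s : G) (f : C.Hom (A.smulObj s x) y) :
    A.skewSingle s f =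
      dsSingle (M := fun s : G => C.Hom (A.smulObj s x) y) s f := rfl

/-- The summation map `HomSum → SkewHom`. -/
noncomputable def PhiL (α β : A.QuotObj) :
    A.HomSum α β →ₗ[k] A.SkewHom (Quotient.out α) (Quotient.out β) :=
  dsToModule k (fun p : A.PairIdx α β => C.Hom p.1.1 p.2.1) _ (Fc A α β)

theorem PhiL_single {α β : A.QuotObj} {x y : C.Obj} (hx : A.orb x = α) (hy : A.orb y = β)
    (f : C.Hom x y) :
    PhiL A α β (A.homSumSingle hx hy f) = Fc A α β ⟨⟨x, hx⟩, ⟨y, hy⟩⟩ f := by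
  unfold GAction.homSumSingle PhiL
  exact dsToModule_single (Fc A α β) ⟨⟨x, hx⟩, ⟨y, hy⟩⟩ f

theorem Fc_smul (hfree : A.IsFree) {α β : A.QuotObj} {x y : C.Obj}
    (hx : A.orb x = α) (hy : A.orb y = β)
    (s : G) (h1 : A.orb (A.smulObj s x) = α) (h2 : A.orb (A.smulObj s y) = β)
    (f : C.Hom x y) :
    Fc A α β ⟨⟨A.smulObj s x, h1⟩, ⟨A.smulObj s y, h2⟩⟩ (A.smulHom s x y f) =
      Fc A α β ⟨⟨x, hx⟩, ⟨y, hy⟩⟩ f := by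
  rw [Fc_apply, Fc_apply]
  have ht1 : trEl A h1 = s * trEl A hx := by
    refine (trEl_eq A hfree h1 ?_).symm
    rw [A.mul_smulObj, trEl_spec]
  have ht2 : trEl A h2 = s * trEl A hy := by
    refine (trEl_eq A hfree h2 ?_).symm
    rw [A.mul_smulObj, trEl_spec]
  refine dsSingle_congr ?_ ?_
  · rw [ht1, ht2]; group
  · refine (homCastL_heq _ _ _).trans (HEq.trans ?_ (homCastL_heq _ _ _).symm)
    refine ((A.mul_smulHom (trEl A h2)⁻¹ s f).symm).trans ?_
    refine smulHom_congr A ?_ rfl rfl HEq.rfl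
    rw [ht2]; group

theorem gSub_le_ker (hfree : A.IsFree) (α β : A.QuotObj) :
    A.gSub α β ≤ LinearMap.ker (PhiL A α β) := by
  rw [GAction.gSub, Submodule.span_le]
  rintro z ⟨s, x, y, hx, hy, f, rfl⟩
  simp only [SetLike.mem_coe, LinearMap.mem_ker, map_sub, PhiL_single]
  rw [sub_eq_zero]
  exact Fc_smul A hfree hx hy s _ _ f

/-- The morphism-level map of the functor `C/G → C[G]`. -/
noncomputable def FmapL (hfree : A.IsFree) (α β : A.QuotObj) :
    A.QuotHom α β →ₗ[k] A.SkewHom (Quotient.out α) (Quotient.out β) :=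
  Submodule.liftQ (A.gSub α β) (PhiL A α β) (gSub_le_ker A hfree α β)

theorem FmapL_proj (hfree : A.IsFree) {α β : A.QuotObj} {x y : C.Obj}
    (hx : A.orb x = α) (hy : A.orb y = β) (f : C.Hom x y) :
    FmapL A hfree α β (A.proj hx hy f) = Fc A α β ⟨⟨x, hx⟩, ⟨y, hy⟩⟩ f := by
  rw [proj_def]
  exact (Submodule.liftQ_apply _ _ _).trans (PhiL_single A hx hy f)

end Aux3

section Aux4
open GAction

variable {k G : Type} [CommRing k] [Group G] {C : kCat k} (A : GAction k G C)
variable (Q : QuotStr A) (S : SkewStr A)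

theorem Qcomp_zero_left {α β γ : A.QuotObj} (f : A.QuotHom α β) :
    Q.comp (0 : A.QuotHom β γ) f = 0 := by
  have h := Q.comp_smul_left (0 : k) (0 : A.QuotHom β γ) f
  rwa [zero_smul, zero_smul] at h

theorem Qcomp_zero_right {α β γ : A.QuotObj} (g : A.QuotHom β γ) :
    Q.comp g (0 : A.QuotHom α β) = 0 := by
  have h := Q.comp_smul_right (0 : k) g (0 : A.QuotHom α β)
  rwa [zero_smul, zero_smul] at h

theorem Scomp_zero_left {x y z : C.Obj} (f : A.SkewHom x y) :
    S.comp (0 : A.SkewHom y z) f = 0 := by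
  have h := S.comp_smul_left (0 : k) (0 : A.SkewHom y z) f
  rwa [zero_smul, zero_smul] at h

theorem Scomp_zero_right {x y z : C.Obj} (g : A.SkewHom y z) :
    S.comp g (0 : A.SkewHom x y) = 0 := by
  have h := S.comp_smul_right (0 : k) g (0 : A.SkewHom x y)
  rwa [zero_smul, zero_smul] at h

/-- Component map of the functor `C[G] → C/G`. -/
noncomputable def Gc (x y : C.Obj) (s : G) :
    C.Hom (A.smulObj s x) y →ₗ[k] A.QuotHom (A.orb x) (A.orb y) :=
  A.projL (A.orb_smul s x) rfl

/-- Morphism-level map of the functor `C[G] → C/G`. -/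
noncomputable def GmapL (x y : C.Obj) :
    A.SkewHom x y →ₗ[k] A.QuotHom (A.orb x) (A.orb y) :=
  dsToModule k (fun s : G => C.Hom (A.smulObj s x) y) _ (Gc A x y)

theorem GmapL_single {x y : C.Obj} (s : G) (f : C.Hom (A.smulObj s x) y) :
    GmapL A x y (A.skewSingle s f) = A.proj (A.orb_smul s x) rfl f := by
  unfold GAction.skewSingle GmapL
  exact dsToModule_single (Gc A x y) s f

theorem Scomp_dsSingle {x y z : C.Obj} (t s : G)
    (g : C.Hom (A.smulObj t y) z) (f : C.Hom (A.smulObj s x) y) :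
    S.comp (dsSingle (M := fun s : G => C.Hom (A.smulObj s y) z) t g)
        (dsSingle (M := fun s : G => C.Hom (A.smulObj s x) y) s f) =
      dsSingle (M := fun s : G => C.Hom (A.smulObj s x) z) (t * s)
        (C.trans2 (A.mul_smulObj t s x).symm rfl (C.comp g (A.smulHom t _ _ f))) :=
  S.comp_single t s g f

theorem Sid_dsSingle (x : C.Obj) :
    S.id x = dsSingle (M := fun s : G => C.Hom (A.smulObj s x) x) 1
      (C.trans2 (A.one_smulObj x).symm rfl (C.id x)) :=
  S.id_single x

theorem Fmap_id (hfree : A.IsFree) (α : A.QuotObj) :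
    FmapL A hfree α α (Q.id α) = S.id (Quotient.out α) := by
  refine (congrArg (FmapL A hfree α α) (Q.id_proj (Quotient.out_eq α))).trans ?_
  refine (FmapL_proj A hfree _ _ _).trans ?_
  refine (Fc_apply A _ _ _).trans ?_
  rw [Sid_dsSingle A S]
  refine dsSingle_congr ?_ ?_
  · rw [inv_mul_cancel]
  · have hobj : A.smulObj (trEl A (Quotient.out_eq α))⁻¹ (Quotient.out α) = Quotient.out α := by
      rw [trEl_out A hfree, inv_one, A.one_smulObj]
    refine (homCastL_heq _ _ _).trans (HEq.trans ?_ (trans2_heq _ _ _).symm)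
    rw [A.smulHom_id]
    exact id_congr hobj

theorem Fmap_comp (hfree : A.IsFree) {α β γ : A.QuotObj}
    (g : A.QuotHom β γ) (f : A.QuotHom α β) :
    FmapL A hfree α γ (Q.comp g f) =
      S.comp (FmapL A hfree β γ g) (FmapL A hfree α β f) := by
  refine quot_ind A (P := fun f => ∀ g, FmapL A hfree α γ (Q.comp g f) =
    S.comp (FmapL A hfree β γ g) (FmapL A hfree α β f)) ?_ ?_ ?_ f g
  · intro g
    rw [Qcomp_zero_right A Q, map_zero, map_zero, Scomp_zero_right A S]
  · intro x y hx hy f0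
    refine quot_ind A (P := fun g => FmapL A hfree α γ (Q.comp g (A.proj hx hy f0)) =
      S.comp (FmapL A hfree β γ g) (FmapL A hfree α β (A.proj hx hy f0))) ?_ ?_ ?_
    · beta_reduce
      rw [Qcomp_zero_left A Q, map_zero, map_zero, Scomp_zero_left A S]
    · intro y' z hy' hz g0
      -- the single-single case
      have hsy : A.smulObj (trEl A hy' * (trEl A hy)⁻¹) y = y' := by
        rw [A.mul_smulObj, inv_smul_spec A hy, trEl_spec A hy']
      have h1' : A.orb (A.smulObj (trEl A hy' * (trEl A hy)⁻¹) x) = α :=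
        (A.orb_smul _ x).trans hx
      have h2' : A.orb (A.smulObj (trEl A hy' * (trEl A hy)⁻¹) y) = β :=
        (A.orb_smul _ y).trans hy
      have htr : trEl A h1' = trEl A hy' * (trEl A hy)⁻¹ * trEl A hx :=
        (trEl_eq A hfree h1' (by rw [A.mul_smulObj, trEl_spec])).symm
      have step1 : A.proj hx hy f0 = A.proj h1' hy'
          (homCastL C rfl hsy (A.smulHom _ x y f0)) := by
        rw [← proj_smul A (trEl A hy' * (trEl A hy)⁻¹) hx hy h1' h2' f0]
        exact proj_congr A rfl hsy _ _ _ _ (homCastL_heq _ _ _).symm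
      conv_lhs => rw [step1, Q.comp_proj h1' hy' hz g0 _]
      rw [FmapL_proj, FmapL_proj, FmapL_proj, Fc_apply, Fc_apply, Fc_apply,
        Scomp_dsSingle A S]
      refine dsSingle_congr ?_ ?_
      · rw [htr]; group
      · refine (homCastL_heq _ _ _).trans (HEq.trans ?_ (trans2_heq _ _ _).symm)
        rw [A.smulHom_comp]
        refine comp_congr ?_ ?_ ?_ (homCastL_heq _ _ _).symm ?_
        · rw [smul_smul_obj, smul_smul_obj, smul_out A _ hx]
          congr 1; group
        · exact smul_out A _ hy'
        · exact inv_smul_spec A hz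
        · -- HEq (smulHom tz⁻¹ f1) (smulHom (tz⁻¹ * ty') cf)
          refine HEq.trans (smulHom_congr A rfl rfl hsy.symm
            (homCastL_heq _ _ _)) ?_
          refine HEq.trans ((A.mul_smulHom _ _ f0).symm) ?_
          refine HEq.trans (HEq.trans
            (smulHom_congr A (mul_assoc _ _ _).symm rfl rfl HEq.rfl)
            (A.mul_smulHom _ _ f0)) ?_
          exact smulHom_congr A rfl (smul_out A _ hx) (inv_smul_spec A hy)
            (homCastL_heq _ _ _).symm
    · intro a b ha hb
      beta_reduce
      rw [Q.comp_add_left, map_add, map_add, ha, hb, S.comp_add_left]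
  · intro a b ha hb
    intro g
    rw [Q.comp_add_right, map_add, map_add, ha, hb, S.comp_add_right]

end Aux4

section Aux5
open GAction

variable {k G : Type} [CommRing k] [Group G] {C : kCat k} (A : GAction k G C)
variable (Q : QuotStr A) (S : SkewStr A)

theorem Gmap_id (x : C.Obj) : GmapL A x x (S.id x) = Q.id (A.orb x) := by
  rw [Sid_dsSingle A S]
  have h := GmapL_single A (x := x) (y := x) 1
    (C.trans2 (A.one_smulObj x).symm rfl (C.id x))
  rw [show A.skewSingle 1 (C.trans2 (A.one_smulObj x).symm rfl (C.id x)) =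
      dsSingle (M := fun s : G => C.Hom (A.smulObj s x) x) 1
        (C.trans2 (A.one_smulObj x).symm rfl (C.id x)) from rfl] at h
  rw [h]
  rw [Q.id_proj (rfl : A.orb x = A.orb x)]
  exact proj_congr A (A.one_smulObj x) rfl _ _ _ _ (trans2_heq _ _ _)

theorem GmapL_dsSingle {x y : C.Obj} (s : G) (f : C.Hom (A.smulObj s x) y) :
    GmapL A x y (dsSingle (M := fun s : G => C.Hom (A.smulObj s x) y) s f) =
      A.proj (A.orb_smul s x) rfl f :=
  GmapL_single A s f

theorem Gmap_comp {x y z : C.Obj} (g : A.SkewHom y z) (f : A.SkewHom x y) :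
    GmapL A x z (S.comp g f) = Q.comp (GmapL A y z g) (GmapL A x y f) := by
  refine skew_ind A (P := fun f => ∀ g, GmapL A x z (S.comp g f) =
    Q.comp (GmapL A y z g) (GmapL A x y f)) ?_ ?_ ?_ f g
  · intro g
    rw [Scomp_zero_right A S, map_zero, map_zero, Qcomp_zero_right A Q]
  · intro s f0
    refine skew_ind A (P := fun g => GmapL A x z (S.comp g (A.skewSingle s f0)) =
      Q.comp (GmapL A y z g) (GmapL A x y (A.skewSingle s f0))) ?_ ?_ ?_
    · beta_reduce
      rw [Scomp_zero_left A S, map_zero, map_zero, Qcomp_zero_left A Q]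
    · intro t g0
      rw [S.comp_single, GmapL_single, GmapL_single, GmapL_single]
      have step1 : A.proj (A.orb_smul (t * s) x) rfl
          (C.trans2 (A.mul_smulObj t s x).symm rfl (C.comp g0 (A.smulHom t _ _ f0))) =
          A.proj ((A.orb_smul t _).trans (A.orb_smul s x)) rfl
            (C.comp g0 (A.smulHom t _ _ f0)) :=
        proj_congr A (A.mul_smulObj t s x) rfl _ _ _ _ (trans2_heq _ _ _)
      rw [step1,
        ← Q.comp_proj ((A.orb_smul t _).trans (A.orb_smul s x)) (A.orb_smul t y) rfl
          g0 (A.smulHom t _ _ f0)]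
      congr 1
      exact proj_smul A t (A.orb_smul s x) rfl _ _ f0
    · intro a b ha hb
      beta_reduce
      rw [S.comp_add_left, map_add, map_add, ha, hb, Q.comp_add_left]
  · intro a b ha hb g
    rw [S.comp_add_right, map_add, map_add, ha, hb, Q.comp_add_right]

end Aux5

section Aux6
open GAction

variable {k G : Type} [CommRing k] [Group G] {C : kCat k} (A : GAction k G C)
variable (Q : QuotStr A) (S : SkewStr A)

/-- Unit components. -/
noncomputable def uApp (α : A.QuotObj) : A.QuotHom α (A.orb (Quotient.out α)) :=
  A.proj (Quotient.out_eq α) rfl (C.id (Quotient.out α))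

noncomputable def uInv (α : A.QuotObj) : A.QuotHom (A.orb (Quotient.out α)) α :=
  A.proj rfl (Quotient.out_eq α) (C.id (Quotient.out α))

theorem uHomInv (α : A.QuotObj) : Q.comp (uInv A α) (uApp A α) = Q.id α := by
  unfold uApp uInv
  rw [Q.comp_proj (Quotient.out_eq α) rfl (Quotient.out_eq α) _ _, C.id_comp]
  exact (Q.id_proj (Quotient.out_eq α)).symm

theorem uInvHom (α : A.QuotObj) :
    Q.comp (uApp A α) (uInv A α) = Q.id (A.orb (Quotient.out α)) := by
  unfold uApp uInv
  rw [Q.comp_proj rfl (Quotient.out_eq α) rfl _ _, C.id_comp]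
  exact (Q.id_proj rfl).symm

theorem unit_nat (hfree : A.IsFree) {α β : A.QuotObj} (f : A.QuotHom α β) :
    Q.comp (uApp A β) f =
      Q.comp (GmapL A (Quotient.out α) (Quotient.out β) (FmapL A hfree α β f))
        (uApp A α) := by
  refine quot_ind A (P := fun f => Q.comp (uApp A β) f =
    Q.comp (GmapL A (Quotient.out α) (Quotient.out β) (FmapL A hfree α β f))
      (uApp A α)) ?_ ?_ ?_ f
  · beta_reduce
    rw [Qcomp_zero_right A Q, map_zero, map_zero, Qcomp_zero_left A Q]
  · beta_reduce
    intro x y hx hy f0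
    have h1 : A.orb (A.smulObj (trEl A hy)⁻¹ x) = α := (A.orb_smul _ x).trans hx
    have h2 : A.orb (A.smulObj (trEl A hy)⁻¹ y) = β := (A.orb_smul _ y).trans hy
    have step1 : A.proj hx hy f0 = A.proj h1 (Quotient.out_eq β)
        (homCastL C rfl (inv_smul_spec A hy) (A.smulHom (trEl A hy)⁻¹ x y f0)) := by
      rw [← proj_smul A (trEl A hy)⁻¹ hx hy h1 h2 f0]
      exact proj_congr A rfl (inv_smul_spec A hy) _ _ _ _ (homCastL_heq _ _ _).symm
    have h3 : A.orb (A.smulObj ((trEl A hy)⁻¹ * trEl A hx) (Quotient.out α)) = α :=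
      (A.orb_smul _ _).trans (Quotient.out_eq α)
    have h4 : A.orb (A.smulObj ((trEl A hy)⁻¹ * trEl A hx) (Quotient.out α)) =
        A.orb (Quotient.out α) := A.orb_smul _ _
    have step2 : A.proj (Quotient.out_eq α) rfl (C.id (Quotient.out α)) =
        A.proj h3 h4 (C.id (A.smulObj ((trEl A hy)⁻¹ * trEl A hx) (Quotient.out α))) := by
      rw [← proj_smul A ((trEl A hy)⁻¹ * trEl A hx) (Quotient.out_eq α) rfl h3 h4
        (C.id (Quotient.out α)), A.smulHom_id]
    unfold uApp
    conv_lhs => rw [step1, Q.comp_proj h1 (Quotient.out_eq β) rfl _ _]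
    rw [C.id_comp, FmapL_proj, Fc_apply, GmapL_dsSingle]
    conv_rhs => rw [step2, Q.comp_proj h3 h4 rfl _ _]
    rw [C.comp_id]
    exact proj_congr A (smul_out A _ hx) rfl _ _ _ _
      ((homCastL_heq _ _ _).trans (homCastL_heq _ _ _).symm)
  · intro a b ha hb
    beta_reduce
    rw [Q.comp_add_right, map_add, map_add, Q.comp_add_left, ha, hb]

theorem unitInv_nat (hfree : A.IsFree) {α β : A.QuotObj} (f : A.QuotHom α β) :
    Q.comp (uInv A β)
        (GmapL A (Quotient.out α) (Quotient.out β) (FmapL A hfree α β f)) =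
      Q.comp f (uInv A α) := by
  refine quot_ind A (P := fun f => Q.comp (uInv A β)
      (GmapL A (Quotient.out α) (Quotient.out β) (FmapL A hfree α β f)) =
    Q.comp f (uInv A α)) ?_ ?_ ?_ f
  · beta_reduce
    rw [map_zero, map_zero, Qcomp_zero_right A Q, Qcomp_zero_left A Q]
  · beta_reduce
    intro x y hx hy f0
    have e : A.smulObj (trEl A hx) (Quotient.out α) = x := trEl_spec A hx
    have h5 : A.orb x = A.orb (Quotient.out α) := e ▸ (A.orb_smul (trEl A hx) (Quotient.out α))
    have step2 : A.proj rfl (Quotient.out_eq α) (C.id (Quotient.out α)) =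
        A.proj h5 hx (C.id x) := by
      rw [← proj_smul A (trEl A hx) rfl (Quotient.out_eq α) (A.orb_smul _ _)
        ((A.orb_smul _ _).trans (Quotient.out_eq α)) (C.id (Quotient.out α)),
        A.smulHom_id]
      exact proj_congr A e e _ _ _ _ (id_congr e)
    unfold uInv
    rw [FmapL_proj, Fc_apply, GmapL_dsSingle,
      Q.comp_proj (A.orb_smul _ _) rfl (Quotient.out_eq β) _ _, C.id_comp]
    conv_rhs => rw [step2, Q.comp_proj h5 hx hy f0 _]
    rw [C.comp_id]
    refine Eq.trans ?_ (proj_smul A (trEl A hy)⁻¹ h5 hy ((A.orb_smul _ x).trans h5)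
      ((A.orb_smul _ y).trans hy) f0)
    exact proj_congr A (smul_out A _ hx).symm (inv_smul_spec A hy).symm _ _ _ _
      (homCastL_heq _ _ _)
  · intro a b ha hb
    beta_reduce
    rw [map_add, map_add, Q.comp_add_right, Q.comp_add_left, ha, hb]

end Aux6

section Aux7
open GAction

variable {k G : Type} [CommRing k] [Group G] {C : kCat k} (A : GAction k G C)
variable (Q : QuotStr A) (S : SkewStr A)

theorem skew_ind_ds {x y : C.Obj} {P : A.SkewHom x y → Prop} (h0 : P 0)
    (hs : ∀ (s : G) (f : C.Hom (A.smulObj s x) y),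
      P (dsSingle (M := fun s : G => C.Hom (A.smulObj s x) y) s f))
    (hadd : ∀ a b, P a → P b → P (a + b)) : ∀ q, P q :=
  ds_induction (M := fun s : G => C.Hom (A.smulObj s x) y) h0 hs hadd

/-- Counit components. -/
noncomputable def coApp (x : C.Obj) : A.SkewHom (Quotient.out (A.orb x)) x :=
  dsSingle (M := fun s : G => C.Hom (A.smulObj s (Quotient.out (A.orb x))) x)
    (trEl A (rfl : A.orb x = A.orb x))
    (C.trans2 (trEl_spec A (rfl : A.orb x = A.orb x)).symm rfl (C.id x))

noncomputable def coInv (x : C.Obj) : A.SkewHom x (Quotient.out (A.orb x)) :=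
  dsSingle (M := fun s : G => C.Hom (A.smulObj s x) (Quotient.out (A.orb x)))
    (trEl A (rfl : A.orb x = A.orb x))⁻¹
    (C.trans2 (inv_smul_spec A (rfl : A.orb x = A.orb x)).symm rfl
      (C.id (Quotient.out (A.orb x))))

theorem coHomInv (x : C.Obj) :
    S.comp (coInv A x) (coApp A x) = S.id (Quotient.out (A.orb x)) := by
  unfold coApp coInv
  rw [Scomp_dsSingle A S, Sid_dsSingle A S]
  refine dsSingle_congr (by group) ?_
  refine (trans2_heq _ _ _).trans (HEq.trans ?_ (trans2_heq _ _ _).symm)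
  have hx1 : A.smulObj (trEl A (rfl : A.orb x = A.orb x))⁻¹
      (A.smulObj (trEl A (rfl : A.orb x = A.orb x)) (Quotient.out (A.orb x))) =
      Quotient.out (A.orb x) := by
    rw [smul_smul_obj, inv_mul_cancel, A.one_smulObj]
  refine HEq.trans (comp_congr hx1 (inv_smul_spec A rfl) rfl (trans2_heq _ _ _) ?_)
    (heq_of_eq (C.id_comp _))
  -- HEq (smulHom σ⁻¹ (trans2 _ _ (id x))) (id out)
  refine HEq.trans (smulHom_congr A rfl (trEl_spec A rfl) rfl (trans2_heq _ _ _)) ?_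
  refine HEq.trans (heq_of_eq (A.smulHom_id _ x)) ?_
  exact id_congr (inv_smul_spec A rfl)

theorem coInvHom (x : C.Obj) : S.comp (coApp A x) (coInv A x) = S.id x := by
  unfold coApp coInv
  rw [Scomp_dsSingle A S, Sid_dsSingle A S]
  refine dsSingle_congr (by group) ?_
  refine (trans2_heq _ _ _).trans (HEq.trans ?_ (trans2_heq _ _ _).symm)
  have hx1 : A.smulObj (trEl A (rfl : A.orb x = A.orb x))
      (A.smulObj (trEl A (rfl : A.orb x = A.orb x))⁻¹ x) = x := by
    rw [smul_smul_obj, mul_inv_cancel, A.one_smulObj]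
  refine HEq.trans (comp_congr hx1 (trEl_spec A rfl) rfl (trans2_heq _ _ _) ?_)
    (heq_of_eq (C.id_comp _))
  refine HEq.trans (smulHom_congr A rfl (inv_smul_spec A rfl) rfl (trans2_heq _ _ _)) ?_
  refine HEq.trans (heq_of_eq (A.smulHom_id _ _)) ?_
  exact id_congr (trEl_spec A rfl)

theorem counit_nat (hfree : A.IsFree) {x y : C.Obj} (h : A.SkewHom x y) :
    S.comp (coApp A y)
        (FmapL A hfree (A.orb x) (A.orb y) (GmapL A x y h)) =
      S.comp h (coApp A x) := by
  refine skew_ind_ds A (P := fun h => S.comp (coApp A y)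
      (FmapL A hfree (A.orb x) (A.orb y) (GmapL A x y h)) =
    S.comp h (coApp A x)) ?_ ?_ ?_ h
  · beta_reduce
    rw [map_zero, map_zero, Scomp_zero_right A S, Scomp_zero_left A S]
  · beta_reduce
    intro s f
    rw [GmapL_dsSingle, FmapL_proj, Fc_apply]
    unfold coApp
    rw [Scomp_dsSingle A S, Scomp_dsSingle A S]
    refine dsSingle_congr ?_ ?_
    · rw [trEl_smul A hfree s x]; group
    · refine (trans2_heq _ _ _).trans (HEq.trans ?_ (trans2_heq _ _ _).symm)
      have hx1 : A.smulObj (trEl A (rfl : A.orb y = A.orb y))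
          (A.smulObj ((trEl A (rfl : A.orb y = A.orb y))⁻¹ * trEl A (A.orb_smul s x))
            (Quotient.out (A.orb x))) = A.smulObj s x := by
        rw [smul_smul_obj]
        have hg : trEl A (rfl : A.orb y = A.orb y) *
            ((trEl A (rfl : A.orb y = A.orb y))⁻¹ * trEl A (A.orb_smul s x)) =
            trEl A (A.orb_smul s x) := by group
        rw [hg, trEl_spec]
      -- LHS heq f via comp (id y) f
      refine HEq.trans (HEq.trans (comp_congr hx1 (trEl_spec A rfl) rfl
        (trans2_heq _ _ _) ?_) (heq_of_eq (C.id_comp f))) ?_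
      · -- HEq (smulHom σy cF) f
        refine HEq.trans (smulHom_congr A rfl (smul_out A _ (A.orb_smul s x)).symm
          (inv_smul_spec A rfl).symm (homCastL_heq _ _ _)) ?_
        refine HEq.trans ((A.mul_smulHom _ _ f).symm) ?_
        refine HEq.trans (smulHom_congr A (mul_inv_cancel _) rfl rfl HEq.rfl) ?_
        exact A.one_smulHom f
      · -- HEq f (RHS content)
        refine HEq.symm ?_
        have hx2 : A.smulObj s (A.smulObj (trEl A (rfl : A.orb x = A.orb x))
            (Quotient.out (A.orb x))) = A.smulObj s x := by rw [trEl_spec]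
        refine HEq.trans (comp_congr hx2 rfl rfl HEq.rfl ?_)
          (heq_of_eq (C.comp_id f))
        refine HEq.trans (smulHom_congr A rfl (trEl_spec A rfl) rfl (trans2_heq _ _ _)) ?_
        exact heq_of_eq (A.smulHom_id _ _)
  · intro a b ha hb
    beta_reduce
    rw [map_add, map_add, S.comp_add_right, S.comp_add_left, ha, hb]

theorem counitInv_nat (hfree : A.IsFree) {x y : C.Obj} (h : A.SkewHom x y) :
    S.comp (coInv A y) h =
      S.comp (FmapL A hfree (A.orb x) (A.orb y) (GmapL A x y h)) (coInv A x) := by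
  refine skew_ind_ds A (P := fun h => S.comp (coInv A y) h =
    S.comp (FmapL A hfree (A.orb x) (A.orb y) (GmapL A x y h)) (coInv A x)) ?_ ?_ ?_ h
  · beta_reduce
    rw [map_zero, map_zero, Scomp_zero_right A S, Scomp_zero_left A S]
  · beta_reduce
    intro s f
    rw [GmapL_dsSingle, FmapL_proj, Fc_apply]
    unfold coInv
    rw [Scomp_dsSingle A S, Scomp_dsSingle A S]
    refine dsSingle_congr ?_ ?_
    · rw [trEl_smul A hfree s x]; group
    · refine (trans2_heq _ _ _).trans (HEq.trans ?_ (trans2_heq _ _ _).symm)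
      -- both sides heq smulHom σy⁻¹ f
      refine HEq.trans (HEq.trans (comp_congr rfl rfl
        (inv_smul_spec A (rfl : A.orb y = A.orb y)).symm
        ((trans2_heq _ _ _).trans (id_congr (inv_smul_spec A (rfl : A.orb y = A.orb y)).symm))
        HEq.rfl) (heq_of_eq (C.id_comp _))) ?_
      -- goal: HEq (smulHom σy⁻¹ f) (RHS content)
      refine HEq.symm ?_
      have hobj : A.smulObj (trEl A (rfl : A.orb x = A.orb x))⁻¹ x =
          Quotient.out (A.orb x) := inv_smul_spec A rfl
      have hx2 : A.smulObj ((trEl A (rfl : A.orb y = A.orb y))⁻¹ * trEl A (A.orb_smul s x))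
          (A.smulObj (trEl A (rfl : A.orb x = A.orb x))⁻¹ x) =
          A.smulObj ((trEl A (rfl : A.orb y = A.orb y))⁻¹ * trEl A (A.orb_smul s x))
            (Quotient.out (A.orb x)) := by rw [hobj]
      refine HEq.trans (HEq.trans (comp_congr hx2 rfl rfl HEq.rfl ?_)
        (heq_of_eq (C.comp_id _))) (homCastL_heq _ _ _)
      refine HEq.trans (smulHom_congr A rfl hobj rfl (trans2_heq _ _ _)) ?_
      exact heq_of_eq (A.smulHom_id _ _)
  · intro a b ha hb
    beta_reduce
    rw [S.comp_add_right, map_add, map_add, S.comp_add_left, ha, hb]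

end Aux7

/-- The equivalence between the quotient category and the skew category. -/
noncomputable def quotSkewEquiv {k G : Type} [CommRing k] [Group G] {C : kCat k}
    (A : GAction k G C) (hfree : A.IsFree) (Q : QuotStr A) (S : SkewStr A) :
    kEquivalence k Q.toKCat S.toKCat where
  F := { obj := fun α => Quotient.out α
         map := fun α β => FmapL A hfree α β
         map_id := fun α => Fmap_id A Q S hfree α
         map_comp := fun g f => Fmap_comp A Q S hfree g f }
  G := { obj := fun x => A.orb x
         map := fun x y => GmapL A x y
         map_id := fun x => Gmap_id A Q S x
         map_comp := fun g f => Gmap_comp A Q S g f }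
  unitIso :=
  { hom := { app := fun α => uApp A α
             naturality := fun f => unit_nat A Q hfree f }
    inv := { app := fun α => uInv A α
             naturality := fun f => unitInv_nat A Q hfree f }
    hom_inv := fun α => uHomInv A Q α
    inv_hom := fun α => uInvHom A Q α }
  counitIso :=
  { hom := { app := fun x => coApp A x
             naturality := fun h => counit_nat A S hfree h }
    inv := { app := fun x => coInv A x
             naturality := fun h => counitInv_nat A S hfree h }
    hom_inv := fun x => coHomInv A S x
    inv_hom := fun x => coInvHom A S x }

theorem quot_equiv_skew' (k G : Type) [CommRing k] [Group G]
    (C : kCat k) (A : GAction k G C) (hfree : A.IsFree)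
    (Q : QuotStr A) (S : SkewStr A) :
    Nonempty (kEquivalence k Q.toKCat S.toKCat) :=
  ⟨quotSkewEquiv A hfree Q S⟩

/-- **Theorem (Cibils–Marcos).** Let `C` be a free `G`-category over `k`. The quotient
category `C/G` and the skew category `C[G]` are equivalent categories over `k`. -/
theorem quot_equiv_skew (k G : Type) [CommRing k] [Group G]
    (C : kCat k) (A : GAction k G C) (hfree : A.IsFree)
    (Q : QuotStr A) (S : SkewStr A) :
    Nonempty (kEquivalence k Q.toKCat S.toKCat) := by
  exact ⟨quotSkewEquiv A hfree Q S⟩
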